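/- (Density matrix corresponding to a given polynomial, Theorem 4.) For every real polynomial P of degree ≤ 2n−2 there exist real numbers λ_0, …, λ_{n−1} and real polynomials ψ_0, …, ψ_{n−1} of degree ≤ n−1 with ∫ ψ_i ψ_j dμ = δ_{ij} such that P(x) = Σ_{i=0}^{n−1} λ_i ψ_i(x)² for all x ∈ ℝ; consequently ∫ P dμ = Σ_{i=0}^{n−1} λ_i. -/

import Mathlib

/-!
Write `P(x) = vᵀ A v` with `v = (1, x, …, x^{n-1})` and `A` a symmetric Hankel matrix. Since the
Gram matrix `M = (∫ x^{j+k} dμ)` is positive definite, `M` and `A` are simultaneously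
diagonalizable by congruence: `C M Cᵀ = 1` and `A = Cᵀ diag(λ) C`. Taking the rows of `C` as the
coefficients of the `ψ_i`, the first identity is orthonormality of the `ψ_i` in `L²(μ)`, the
second gives `P(x) = Σ λ_i ψ_i(x)²`, and integrating it gives `∫ P dμ = Σ λ_i`.
-/

open MeasureTheory Polynomial Matrix
open scoped Finset ComplexOrder

namespace Matrix

theorem dotProduct_transpose_mul_diagonal_mul_mulVec {R ι κ : Type*} [CommSemiring R]
    [Fintype ι] [Fintype κ] [DecidableEq κ] (C : Matrix κ ι R) (d : κ → R) (v : ι → R) :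
    v ⬝ᵥ ((Cᵀ * diagonal d * C) *ᵥ v) = ∑ i, d i * (C *ᵥ v) i ^ 2 := by
  rw [← mulVec_mulVec, ← mulVec_mulVec, dotProduct_mulVec, vecMul_transpose]
  exact Finset.sum_congr rfl fun i _ => by rw [mulVec_diagonal]; ring

variable {𝕜 ι : Type*} [RCLike 𝕜] [Fintype ι] [DecidableEq ι]

open scoped MatrixOrder in
theorem PosDef.exists_isUnit_eq_conjTranspose_mul_self {M : Matrix ι ι 𝕜} (hM : M.PosDef) :
    ∃ B : Matrix ι ι 𝕜, IsUnit B ∧ M = Bᴴ * B := by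
  obtain ⟨B, rfl⟩ := CStarAlgebra.nonneg_iff_eq_star_mul_self.mp hM.posSemidef.nonneg
  have hdet := (isUnit_iff_isUnit_det _).mp hM.isUnit
  rw [det_mul] at hdet
  exact ⟨B, (isUnit_iff_isUnit_det B).mpr (isUnit_of_mul_isUnit_right hdet), rfl⟩

/-- With `M = Bᴴ B` and `B A Bᴴ = U D Uᴴ` (spectral theorem), `C = (B⁻¹ U)ᴴ` works. -/
theorem PosDef.exists_simultaneous_diagonalization {M A : Matrix ι ι 𝕜} (hM : M.PosDef)
    (hA : A.IsHermitian) :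
    ∃ (C : Matrix ι ι 𝕜) (d : ι → ℝ),
      C * M * Cᴴ = 1 ∧ Cᴴ * diagonal (fun i => (d i : 𝕜)) * C = A := by
  obtain ⟨B, hB, rfl⟩ := hM.exists_isUnit_eq_conjTranspose_mul_self
  have hBdet := (isUnit_iff_isUnit_det B).mp hB
  have hH := isHermitian_mul_mul_conjTranspose B hA
  set U : Matrix ι ι 𝕜 := (hH.eigenvectorUnitary : Matrix ι ι 𝕜)
  set D : Matrix ι ι 𝕜 := diagonal fun i => (hH.eigenvalues i : 𝕜)
  have hspec : B * A * Bᴴ = U * D * Uᴴ := hH.spectral_theorem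
  have hUU : Uᴴ * U = 1 := Unitary.coe_star_mul_self hH.eigenvectorUnitary
  refine ⟨(B⁻¹ * U)ᴴ, hH.eigenvalues, ?_, ?_⟩
  · calc (B⁻¹ * U)ᴴ * (Bᴴ * B) * (B⁻¹ * U)ᴴᴴ = Uᴴ * (B * B⁻¹)ᴴ * (B * B⁻¹) * U := by
          simp only [conjTranspose_mul, conjTranspose_conjTranspose, Matrix.mul_assoc]
      _ = 1 := by rw [mul_nonsing_inv _ hBdet]; simpa using hUU
  · calc (B⁻¹ * U)ᴴᴴ * D * (B⁻¹ * U)ᴴ = B⁻¹ * (U * D * Uᴴ) * B⁻¹ᴴ := by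
          simp only [conjTranspose_mul, conjTranspose_conjTranspose, Matrix.mul_assoc]
      _ = (B⁻¹ * B) * A * (B⁻¹ * B)ᴴ := by
          rw [← hspec]; simp only [conjTranspose_mul, Matrix.mul_assoc]
      _ = A := by rw [nonsing_inv_mul _ hBdet]; simp

end Matrix

namespace Polynomial

section CoeffVec

variable {R : Type*} [CommSemiring R] {n : ℕ}

def powVec (n : ℕ) (x : R) : Fin n → R := fun k => x ^ (k : ℕ)

noncomputable def ofCoeffVec (c : Fin n → R) : R[X] := ∑ k, C (c k) * X ^ (k : ℕ)

theorem eval_ofCoeffVec (c : Fin n → R) (x : R) : (ofCoeffVec c).eval x = c ⬝ᵥ powVec n x := by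
  simp [ofCoeffVec, eval_finsetSum, dotProduct, powVec]

theorem natDegree_ofCoeffVec_le (c : Fin n → R) : (ofCoeffVec c).natDegree ≤ n - 1 :=
  natDegree_sum_le_of_forall_le _ _ fun k _ => (natDegree_C_mul_X_pow_le _ _).trans (by omega)

end CoeffVec

section Hankel

variable {K : Type*} [Field K] {n : ℕ}

def antidiagonalCard (n m : ℕ) : ℕ := #{p : Fin n × Fin n | (p.1 : ℕ) + p.2 = m}

theorem antidiagonalCard_pos {m : ℕ} (hn : 1 ≤ n) (hm : m ≤ 2 * n - 2) :
    0 < antidiagonalCard n m :=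
  Finset.card_pos.mpr ⟨(⟨min m (n - 1), by omega⟩, ⟨m - min m (n - 1), by omega⟩), by
    simp only [Finset.mem_filter, Finset.mem_univ, true_and]; omega⟩

/-- The coefficient of `X^m` is spread evenly over the antidiagonal `j + k = m`. -/
noncomputable def hankelOfPoly (n : ℕ) (P : K[X]) : Matrix (Fin n) (Fin n) K :=
  Matrix.of fun j k => P.coeff (j + k) / antidiagonalCard n (j + k)

theorem isSymm_hankelOfPoly (P : K[X]) : (hankelOfPoly n P).IsSymm := by
  ext j k
  simp [hankelOfPoly, add_comm]

theorem powVec_dotProduct_hankelOfPoly_mulVec [CharZero K] {P : K[X]} (hn : 1 ≤ n)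
    (hP : P.natDegree ≤ 2 * n - 2) (x : K) :
    powVec n x ⬝ᵥ (hankelOfPoly n P *ᵥ powVec n x) = P.eval x := by
  have hsum : powVec n x ⬝ᵥ (hankelOfPoly n P *ᵥ powVec n x) = ∑ p : Fin n × Fin n,
      P.coeff (p.1 + p.2) / antidiagonalCard n (p.1 + p.2) * x ^ ((p.1 : ℕ) + p.2) := by
    simp only [dotProduct, mulVec, powVec, hankelOfPoly, Matrix.of_apply, Finset.mul_sum,
      ← Finset.sum_product', pow_add]
    exact Finset.sum_congr rfl fun p _ => by ring
  have hmaps : ∀ p ∈ (Finset.univ : Finset (Fin n × Fin n)),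
      (p.1 : ℕ) + p.2 ∈ Finset.range (2 * n - 1) := fun p _ => by
    simp only [Finset.mem_range]; omega
  rw [hsum, ← Finset.sum_fiberwise_of_maps_to hmaps, eval_eq_sum_range' (n := 2 * n - 1) (by omega)]
  refine Finset.sum_congr rfl fun m hm => ?_
  have hcard : (antidiagonalCard n m : K) ≠ 0 :=
    Nat.cast_ne_zero.mpr (antidiagonalCard_pos hn (by have := Finset.mem_range.mp hm; omega)).ne'
  rw [Finset.sum_congr rfl fun p hp => by rw [(Finset.mem_filter.mp hp).2], Finset.sum_const,
    nsmul_eq_mul]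
  change (antidiagonalCard n m : K) * _ = _
  field_simp

end Hankel

end Polynomial

section Moments

variable {μ : Measure ℝ} {n : ℕ}

noncomputable def momentMatrix (μ : Measure ℝ) (n : ℕ) : Matrix (Fin n) (Fin n) ℝ :=
  Matrix.of fun j k => ∫ x, x ^ ((j : ℕ) + (k : ℕ)) ∂μ

theorem Polynomial.integrable_eval (hpow : ∀ k : ℕ, Integrable (fun x : ℝ => x ^ k) μ)
    (p : ℝ[X]) : Integrable (fun x => p.eval x) μ := by
  induction p using Polynomial.induction_on' with
  | add p q hp hq => simp only [eval_add]; exact hp.add hq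
  | monomial k a => simpa using (hpow k).const_mul a

theorem integral_eval_ofCoeffVec_mul_eval_ofCoeffVec
    (hpow : ∀ k : ℕ, Integrable (fun x : ℝ => x ^ k) μ) (a b : Fin n → ℝ) :
    ∫ x, (ofCoeffVec a).eval x * (ofCoeffVec b).eval x ∂μ = a ⬝ᵥ (momentMatrix μ n *ᵥ b) := by
  have hprod : ∀ x, (ofCoeffVec a).eval x * (ofCoeffVec b).eval x =
      ∑ j, ∑ k, a j * b k * x ^ ((j : ℕ) + (k : ℕ)) := fun x => by
    simp only [eval_ofCoeffVec, dotProduct, powVec, Finset.sum_mul_sum, pow_add]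
    exact Finset.sum_congr rfl fun j _ => Finset.sum_congr rfl fun k _ => by ring
  simp only [hprod, dotProduct, mulVec, momentMatrix, Matrix.of_apply, Finset.mul_sum]
  rw [integral_finsetSum _ fun j _ => integrable_finsetSum _ fun k _ => (hpow _).const_mul _]
  refine Finset.sum_congr rfl fun j _ => ?_
  rw [integral_finsetSum _ fun k _ => (hpow _).const_mul _]
  refine Finset.sum_congr rfl fun k _ => ?_
  rw [integral_const_mul]
  ring

end Moments

/-- Theorem 4: every real polynomial `P` of degree `≤ 2n-2` can be written
as `P(x) = Σ_i lam_i ψ_i(x)²` with `ψ_i` orthonormal in `L²(μ)` of degree `≤ n-1`;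
consequently `∫ P dμ = Σ_i lam_i`. -/
theorem density_matrix_of_polynomial (n : ℕ) (hn : 1 ≤ n) (μ : Measure ℝ)
    (hmom : ∀ k : ℕ, Integrable (fun x => |x| ^ k) μ)
    (hgram : (Matrix.of fun j k : Fin n => ∫ x, x ^ ((j : ℕ) + (k : ℕ)) ∂μ).PosDef)
    (P : Polynomial ℝ) (hPdeg : P.natDegree ≤ 2 * n - 2) :
    ∃ (lam : Fin n → ℝ) (ψ : Fin n → Polynomial ℝ),
      (∀ i, (ψ i).natDegree ≤ n - 1) ∧
      (∀ i j, (∫ x, (ψ i).eval x * (ψ j).eval x ∂μ) = if i = j then 1 else 0) ∧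
      (∀ x : ℝ, P.eval x = ∑ i, lam i * ((ψ i).eval x) ^ 2) ∧
      (∫ x, P.eval x ∂μ) = ∑ i, lam i := by
  have hpow (k : ℕ) : Integrable (fun x : ℝ => x ^ k) μ :=
    (integrable_norm_iff (by fun_prop)).mp (by simpa only [norm_pow, Real.norm_eq_abs] using hmom k)
  obtain ⟨C, d, hCM, hCA⟩ := PosDef.exists_simultaneous_diagonalization (M := momentMatrix μ n)
    hgram (isHermitian_iff_isSymm.mpr (isSymm_hankelOfPoly P))
  simp only [conjTranspose_eq_transpose_of_trivial, RCLike.ofReal_real_eq_id, id] at hCM hCA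
  set ψ := fun i => ofCoeffVec (C i)
  have horth (i j : Fin n) : ∫ x, (ψ i).eval x * (ψ j).eval x ∂μ = if i = j then 1 else 0 := by
    rw [integral_eval_ofCoeffVec_mul_eval_ofCoeffVec hpow, ← one_apply, ← hCM, mul_mul_apply,
      transpose_transpose]
  have hsq (x : ℝ) : P.eval x = ∑ i, d i * ((ψ i).eval x) ^ 2 := by
    rw [← powVec_dotProduct_hankelOfPoly_mulVec hn hPdeg, ← hCA,
      dotProduct_transpose_mul_diagonal_mul_mulVec]
    simp only [ψ, eval_ofCoeffVec, mulVec]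
  refine ⟨d, ψ, fun i => natDegree_ofCoeffVec_le _, horth, hsq, ?_⟩
  calc ∫ x, P.eval x ∂μ = ∫ x, ∑ i, d i * ((ψ i).eval x) ^ 2 ∂μ := by simp only [hsq]
    _ = ∑ i, d i * ∫ x, (ψ i).eval x * (ψ i).eval x ∂μ := by
      simp only [sq]
      rw [integral_finsetSum _ fun i _ => ?_]
      · simp only [integral_const_mul]
      · simpa only [eval_mul] using ((ψ i * ψ i).integrable_eval hpow).const_mul (d i)
    _ = ∑ i, d i := by simp [horth]
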